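/- Let 0 < q ≤ 1, q ≤ r ≤ ∞, and suppose the m×n matrix A satisfies the t-truncated (l_r,l_q)–l_p sparse approximation property of order k with constants D > 0 and 0 < β < 1 for the set T with |T| = t. If v ∈ ℝⁿ satisfies ‖Av‖_p ≤ ε + η and the cone constraint ‖v_{T∩Kᶜ}‖_q^q ≤ 2σ_k(x_T)_q^q + ‖v_{T∩K}‖_q^q (where K ⊆ T indexes the k largest entries of x_T), then ‖v_{T∩K}‖_r^q ≤ (D/(1−β))(ε+η)^q + (2β/(1−β)) k^{q/r−1} σ_k(x_T)_q^q. -/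

import Mathlib

open Finset Matrix

/-- `x` restricted to index set `S` (zero outside `S`). -/
noncomputable def restr {n : ℕ} (S : Finset (Fin n)) (x : Fin n → ℝ) : Fin n → ℝ :=
  fun j => if j ∈ S then x j else 0

/-- The `ℓ_p` (quasi)norm `(∑ |x_j|^p)^{1/p}`. -/
noncomputable def lnorm {n : ℕ} (p : ℝ) (x : Fin n → ℝ) : ℝ :=
  (∑ j, |x j| ^ p) ^ (1 / p)

/-- The `q`-th power of the `ℓ_q` quasinorm, `∑ |x_j|^q`. -/
noncomputable def lqq {n : ℕ} (q : ℝ) (x : Fin n → ℝ) : ℝ :=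
  ∑ j, |x j| ^ q

/-- `K ⊆ T` is an index set of `k` largest-in-magnitude coefficients of `x` on `T`. -/
def IsLargest {n : ℕ} (x : Fin n → ℝ) (T K : Finset (Fin n)) (k : ℕ) : Prop :=
  K ⊆ T ∧ K.card = k ∧ ∀ i ∈ K, ∀ j ∈ T \ K, |x j| ≤ |x i|

/-- Number of nonzero entries (the `ℓ_0` "norm"). -/
noncomputable def spt {n : ℕ} (x : Fin n → ℝ) : ℕ := (Function.support x).ncard

/-- `t`-truncated `(l_r,l_q)-l_p` sparse approximation property of order `k`
with constants `D` and `β`. -/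
def TruncSAP {m n : ℕ} (A : Matrix (Fin m) (Fin n) ℝ) (t k : ℕ) (r q p D β : ℝ) : Prop :=
  ∀ (x : Fin n → ℝ) (T K : Finset (Fin n)), T.card = t → IsLargest x T K k →
    lnorm r (restr K x) ^ q ≤
      D * lnorm p (A.mulVec x) ^ q + β * (k : ℝ) ^ (q / r - 1) * lqq q (restr (T \ K) x)

lemma sum_pow_restr {n : ℕ} {p : ℝ} (hp : p ≠ 0) (S : Finset (Fin n)) (u : Fin n → ℝ) :
    ∑ j, |restr S u j| ^ p = ∑ j ∈ S, |u j| ^ p := by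
  unfold restr
  rw [← Finset.sum_filter_add_sum_filter_not Finset.univ (· ∈ S)]
  have h1 : ∀ j ∈ Finset.univ.filter (· ∈ S), |if j ∈ S then u j else 0| ^ p = |u j| ^ p := by
    intro j hj; simp at hj; simp [hj]
  have h2 : ∀ j ∈ Finset.univ.filter (¬ · ∈ S), |if j ∈ S then u j else 0| ^ p = 0 := by
    intro j hj; simp at hj; simp [hj, Real.zero_rpow hp]
  rw [Finset.sum_congr rfl h1, Finset.sum_congr rfl h2, Finset.sum_const_zero, add_zero]
  congr 1
  ext j; simp

lemma lqq_restr {n : ℕ} {q : ℝ} (hq : q ≠ 0) (S : Finset (Fin n)) (u : Fin n → ℝ) :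
    lqq q (restr S u) = ∑ j ∈ S, |u j| ^ q := sum_pow_restr hq S u

lemma sum_compare {n : ℕ} (f : Fin n → ℝ)
    (A B : Finset (Fin n)) (hcard : A.card = B.card)
    (h : ∀ a ∈ A \ B, ∀ b ∈ B \ A, f a ≤ f b) :
    ∑ j ∈ A, f j ≤ ∑ j ∈ B, f j := by
  rw [← Finset.sum_inter_add_sum_sdiff A B f, ← Finset.sum_inter_add_sum_sdiff B A f,
    Finset.inter_comm B A]
  have hc : (A \ B).card = (B \ A).card := by
    have h1 := Finset.card_inter_add_card_sdiff A B
    have h2 := Finset.card_inter_add_card_sdiff B A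
    rw [Finset.inter_comm B A] at h2
    omega
  have key : ∑ j ∈ A \ B, f j ≤ ∑ j ∈ B \ A, f j := by
    rcases Finset.eq_empty_or_nonempty (B \ A) with he | hne
    · have : A \ B = ∅ := Finset.card_eq_zero.mp (by rw [hc, he]; simp)
      simp [this, he]
    · obtain ⟨b0, hb0, hmin⟩ := Finset.exists_min_image (B \ A) f hne
      calc ∑ j ∈ A \ B, f j ≤ (A \ B).card • f b0 :=
            Finset.sum_le_card_nsmul _ _ _ (fun a ha => h a ha b0 hb0)
        _ = (B \ A).card • f b0 := by rw [hc]
        _ ≤ ∑ j ∈ B \ A, f j := Finset.card_nsmul_le_sum _ _ _ (fun b hb => hmin b hb)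
  linarith

lemma exists_largest {n : ℕ} (v : Fin n → ℝ) (T : Finset (Fin n)) :
    ∀ k, k ≤ T.card → ∃ K, IsLargest v T K k := by
  intro k
  induction k with
  | zero => intro _; exact ⟨∅, by simp [IsLargest]⟩
  | succ k ih =>
    intro hk
    obtain ⟨K, hKT, hKc, hKl⟩ := ih (le_trans (Nat.le_succ k) hk)
    have hne : (T \ K).Nonempty := by
      rw [← Finset.card_pos, Finset.card_sdiff_of_subset hKT, hKc]; omega
    obtain ⟨j0, hj0, hj0max⟩ := Finset.exists_max_image (T \ K) (fun j => |v j|) hne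
    refine ⟨insert j0 K, Finset.insert_subset (Finset.mem_sdiff.mp hj0).1 hKT,
      by rw [Finset.card_insert_of_notMem (Finset.mem_sdiff.mp hj0).2, hKc], ?_⟩
    intro i hi j hj
    have hj' : j ∈ T \ K := by
      rcases Finset.mem_sdiff.mp hj with ⟨hjT, hjK⟩
      exact Finset.mem_sdiff.mpr ⟨hjT, fun h => hjK (Finset.mem_insert_of_mem h)⟩
    rcases Finset.mem_insert.mp hi with rfl | hiK
    · exact hj0max j hj'
    · exact hKl i hiK j hj'

lemma qr_holder {n : ℕ} {q r : ℝ} (hq0 : 0 < q) (hqr : q ≤ r)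
    (S : Finset (Fin n)) (v : Fin n → ℝ) :
    ∑ j ∈ S, |v j| ^ q ≤ (S.card : ℝ) ^ (1 - q / r) * (∑ j ∈ S, |v j| ^ r) ^ (q / r) := by
  have hr0 : 0 < r := lt_of_lt_of_le hq0 hqr
  rcases eq_or_lt_of_le hqr with rfl | hlt
  · rw [div_self hq0.ne', sub_self, Real.rpow_zero, one_mul, Real.rpow_one]
  · have hp1 : 1 < r / q := (one_lt_div hq0).mpr hlt
    have hconj : (r / q).HolderConjugate (r / (r - q)) := by
      rw [Real.holderConjugate_iff]
      constructor
      · exact hp1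
      · rw [inv_div, inv_div]
        field_simp
        ring
    have key := Real.inner_le_Lp_mul_Lq (s := S) (fun j => |v j| ^ q) (fun _ => (1 : ℝ)) hconj
    simp only [mul_one] at key
    calc ∑ j ∈ S, |v j| ^ q ≤
        (∑ j ∈ S, abs (|v j| ^ q) ^ (r / q)) ^ (1 / (r / q)) *
          (∑ j ∈ S, |(1:ℝ)| ^ (r / (r - q))) ^ (1 / (r / (r - q))) := key
      _ = (S.card : ℝ) ^ (1 - q / r) * (∑ j ∈ S, |v j| ^ r) ^ (q / r) := by
          have h1 : ∀ j ∈ S, abs (|v j| ^ q) ^ (r / q) = |v j| ^ r := by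
            intro j _
            rw [abs_of_nonneg (Real.rpow_nonneg (abs_nonneg _) _), ← Real.rpow_mul (abs_nonneg _)]
            congr 1
            field_simp
          rw [Finset.sum_congr rfl h1]
          simp only [abs_one, Real.one_rpow, Finset.sum_const, nsmul_eq_mul, mul_one]
          rw [mul_comm]
          congr 1
          · congr 1
            rw [one_div, inv_div]
            field_simp
          · congr 1
            rw [one_div, inv_div]

/-- bound on `‖v_{T∩K}‖_r^q` from the truncated sparse approximation
property, the tube constraint and the cone constraint. -/
theorem stmt2 {m n : ℕ} (A : Matrix (Fin m) (Fin n) ℝ) (t k : ℕ)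
    (r q p D β ε η : ℝ) (hq0 : 0 < q) (hq1 : q ≤ 1) (hqr : q ≤ r)
    (hD : 0 < D) (hβ0 : 0 < β) (hβ1 : β < 1)
    (hSAP : TruncSAP A t k r q p D β)
    (x v : Fin n → ℝ) (T K : Finset (Fin n)) (hT : T.card = t)
    (hK : IsLargest x T K k)
    (htube : lnorm p (A.mulVec v) ≤ ε + η)
    (hcone : lqq q (restr (T \ K) v) ≤ 2 * lqq q (restr (T \ K) x) + lqq q (restr (T ∩ K) v)) :
    lnorm r (restr (T ∩ K) v) ^ q ≤
      D / (1 - β) * (ε + η) ^ q +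
        2 * β / (1 - β) * (k : ℝ) ^ (q / r - 1) * lqq q (restr (T \ K) x) := by
  obtain ⟨hKT, hKcard, _⟩ := hK
  have hr0 : 0 < r := lt_of_lt_of_le hq0 hqr
  have hTK : T ∩ K = K := Finset.inter_eq_right.mpr hKT
  rw [hTK] at hcone ⊢
  have hβ' : 0 < 1 - β := by linarith
  have hlnp : 0 ≤ lnorm p (A.mulVec v) :=
    Real.rpow_nonneg (Finset.sum_nonneg fun j _ => Real.rpow_nonneg (abs_nonneg _) _) _
  have hεη : 0 ≤ ε + η := le_trans hlnp htube
  have hL : 0 ≤ lqq q (restr (T \ K) x) :=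
    Finset.sum_nonneg fun j _ => Real.rpow_nonneg (abs_nonneg _) _
  have hkpow : 0 ≤ (k : ℝ) ^ (q / r - 1) := Real.rpow_nonneg (Nat.cast_nonneg k) _
  have hsums : ∀ S : Finset (Fin n),
      lnorm r (restr S v) ^ q = (∑ j ∈ S, |v j| ^ r) ^ (q / r) := by
    intro S
    have hnn : 0 ≤ ∑ j ∈ S, |v j| ^ r :=
      Finset.sum_nonneg fun j _ => Real.rpow_nonneg (abs_nonneg _) _
    rw [lnorm, sum_pow_restr hr0.ne', ← Real.rpow_mul hnn, one_div, inv_mul_eq_div]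
  rcases Nat.eq_zero_or_pos k with hk0 | hkpos
  · subst hk0
    have hKe : K = ∅ := Finset.card_eq_zero.mp hKcard
    rw [hKe] at hL ⊢
    rw [hsums]
    simp only [Finset.sum_empty]
    rw [Real.zero_rpow (by positivity : q / r ≠ 0)]
    have h1 : 0 ≤ D / (1 - β) * (ε + η) ^ q :=
      mul_nonneg (div_nonneg hD.le hβ'.le) (Real.rpow_nonneg hεη q)
    have h2 : 0 ≤ 2 * β / (1 - β) * ((0:ℕ):ℝ) ^ (q / r - 1) * lqq q (restr (T \ ∅) x) :=
      mul_nonneg (mul_nonneg (div_nonneg (by linarith) hβ'.le)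
        (Real.rpow_nonneg (by norm_num) _)) hL
    linarith
  · have hkT : k ≤ T.card := hKcard ▸ Finset.card_le_card hKT
    obtain ⟨K', hK'T, hK'card, hK'max⟩ := exists_largest v T k hkT
    set c := (k : ℝ) ^ (q / r - 1) with hc
    set L := lqq q (restr (T \ K) x) with hLdef
    set X := (∑ j ∈ K', |v j| ^ r) ^ (q / r) with hX
    have hXnn : 0 ≤ X := Real.rpow_nonneg
      (Finset.sum_nonneg fun j _ => Real.rpow_nonneg (abs_nonneg _) _) _
    -- step 1 : K-sum ≤ K'-sum in r-power
    have h1 : lnorm r (restr K v) ^ q ≤ X := by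
      rw [hsums, hX]
      refine Real.rpow_le_rpow
        (Finset.sum_nonneg fun j _ => Real.rpow_nonneg (abs_nonneg _) _) ?_ (by positivity)
      refine sum_compare _ K K' (hKcard.trans hK'card.symm) ?_
      intro a ha b hb
      have haTK' : a ∈ T \ K' := Finset.mem_sdiff.mpr
        ⟨hKT (Finset.mem_sdiff.mp ha).1, (Finset.mem_sdiff.mp ha).2⟩
      exact Real.rpow_le_rpow (abs_nonneg _)
        (hK'max b (Finset.mem_sdiff.mp hb).1 a haTK') hr0.le
    -- SAP applied to v with K'
    have hsap := hSAP v T K' hT ⟨hK'T, hK'card, hK'max⟩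
    rw [hsums K'] at hsap
    -- tube
    have h3 : lnorm p (A.mulVec v) ^ q ≤ (ε + η) ^ q :=
      Real.rpow_le_rpow hlnp htube hq0.le
    -- step 4 : complement comparison
    have h4 : lqq q (restr (T \ K') v) ≤ lqq q (restr (T \ K) v) := by
      rw [lqq_restr hq0.ne', lqq_restr hq0.ne']
      refine sum_compare _ _ _ ?_ ?_
      · rw [Finset.card_sdiff_of_subset hK'T, Finset.card_sdiff_of_subset hKT, hKcard, hK'card]
      · intro a ha b hb
        obtain ⟨ha1, _⟩ := Finset.mem_sdiff.mp ha
        obtain ⟨hb1, hb2⟩ := Finset.mem_sdiff.mp hb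
        have hbK' : b ∈ K' := by
          by_contra hcon
          exact hb2 (Finset.mem_sdiff.mpr ⟨(Finset.mem_sdiff.mp hb1).1, hcon⟩)
        exact Real.rpow_le_rpow (abs_nonneg _) (hK'max b hbK' a ha1) hq0.le
    -- step 6 : K-sum ≤ K'-sum in q-power
    have h6 : lqq q (restr K v) ≤ lqq q (restr K' v) := by
      rw [lqq_restr hq0.ne', lqq_restr hq0.ne']
      refine sum_compare _ K K' (hKcard.trans hK'card.symm) ?_
      intro a ha b hb
      have haTK' : a ∈ T \ K' := Finset.mem_sdiff.mpr
        ⟨hKT (Finset.mem_sdiff.mp ha).1, (Finset.mem_sdiff.mp ha).2⟩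
      exact Real.rpow_le_rpow (abs_nonneg _)
        (hK'max b (Finset.mem_sdiff.mp hb).1 a haTK') hq0.le
    -- step 7 : Hölder
    have h7 : lqq q (restr K' v) ≤ (k : ℝ) ^ (1 - q / r) * X := by
      rw [lqq_restr hq0.ne', hX, ← hK'card]
      exact qr_holder hq0 hqr K' v
    have hV : lqq q (restr (T \ K') v) ≤ 2 * L + (k : ℝ) ^ (1 - q / r) * X := by
      linarith
    have hmain : X ≤ D * (ε + η) ^ q + β * c * (2 * L + (k : ℝ) ^ (1 - q / r) * X) := by
      refine hsap.trans ?_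
      exact add_le_add (mul_le_mul_of_nonneg_left h3 hD.le)
        (mul_le_mul_of_nonneg_left hV (mul_nonneg hβ0.le hkpow))
    have hck : c * (k : ℝ) ^ (1 - q / r) = 1 := by
      rw [hc, ← Real.rpow_add (by exact_mod_cast hkpos)]
      norm_num
    have hβX : β * c * ((k : ℝ) ^ (1 - q / r) * X) = β * X := by
      rw [show β * c * ((k : ℝ) ^ (1 - q / r) * X) = β * (c * (k : ℝ) ^ (1 - q / r)) * X
        from by ring, hck, mul_one]
    rw [mul_add] at hmain
    have hfin : X ≤ D / (1 - β) * (ε + η) ^ q + 2 * β / (1 - β) * c * L := by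
      rw [div_mul_eq_mul_div, div_mul_eq_mul_div, div_mul_eq_mul_div, ← add_div,
        le_div_iff₀ hβ']
      nlinarith [hmain, hβX]
    exact h1.trans hfin
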